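/- In the K-user polyhedral TIN region characterization, the cycle conditions through the auxiliary vertex u combined with the two-hop cycles imply all mixed-cycle conditions are redundant: if d_k ≤ α_{kk}^{[l_k]} for all k and states l_k, and for every cyclic sequence (i_1,...,i_m) of distinct users and every choice of states, ∑_{j=1}^m d_{i_j} ≤ ∑_{j=1}^m (α_{i_j i_j}^{[l_{i_j}]} − α_{i_j i_{j+1}}^{[l_{i_j}]}) (indices mod m), then every directed cycle in the full potential graph (including those passing through u and repeating user-vertices via zero-length same-user edges) has nonnegative length. -/

import Mathlib

/-!
Collapse the states of each user into a single vertex, giving every edge the cheapest length over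
the states of its source. A closed walk in the potential graph is no shorter than its image, a
closed walk on the users and `u`. A closed walk with a repeated vertex splits into two shorter
closed walks, so only simple cycles matter. A simple cycle avoiding `u` is one of the cyclic
sequences of the hypothesis, evaluated at the minimising states. In a simple cycle through `u`,
skipping `u` can only shorten it, because `α ≥ 0` and `d k ≤ α_kk`; what is left is again a
cycle of distinct users.
-/

theorem List.exists_eq_append_cons_append_cons_of_not_nodup {V : Type*} {l : List V}
    (h : ¬l.Nodup) : ∃ b p q r, l = p ++ b :: q ++ b :: r := by
  obtain ⟨b, hb⟩ := List.exists_duplicate_iff_not_nodup.mpr h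
  obtain ⟨r₁, r₂, rfl, hb₁, hb₂⟩ :=
    List.cons_sublist_iff.mp (List.duplicate_iff_sublist.mp hb)
  obtain ⟨p, q, rfl⟩ := List.append_of_mem hb₁
  obtain ⟨s, r, rfl⟩ := List.append_of_mem (List.singleton_sublist.mp hb₂)
  exact ⟨b, p, q ++ s, r, by simp⟩

theorem List.exists_eq_map_some {β : Type*} :
    ∀ {l : List (Option β)}, none ∉ l → ∃ ks : List β, l = ks.map some
  | [], _ => ⟨[], rfl⟩
  | none :: _, h => absurd List.mem_cons_self h
  | some k :: t, h => by
    obtain ⟨ks, rfl⟩ := List.exists_eq_map_some fun ht => h (List.mem_cons_of_mem _ ht)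
    exact ⟨k :: ks, rfl⟩

section WalkWeight

variable {V : Type*} (w : V → V → ℝ)

def walkWeight : List V → ℝ
  | a :: b :: l => w a b + walkWeight (b :: l)
  | _ => 0

theorem walkWeight_append_cons :
    ∀ (l₁ : List V) (x : V) (l₂ : List V),
      walkWeight w (l₁ ++ x :: l₂) = walkWeight w (l₁ ++ [x]) + walkWeight w (x :: l₂)
  | [], _, _ => by simp [walkWeight]
  | [_], _, _ => by simp [walkWeight]
  | a :: b :: l, x, l₂ => by
    have ih := walkWeight_append_cons (b :: l) x l₂
    simp only [List.cons_append, walkWeight] at ih ⊢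
    rw [ih]
    ring

theorem walkWeight_map {W : Type*} (f : W → V) :
    ∀ l : List W, walkWeight w (l.map f) = walkWeight (fun a b => w (f a) (f b)) l
  | [] | [_] => rfl
  | a :: b :: l => by
    simp only [List.map_cons, walkWeight, ← walkWeight_map f (b :: l)]

theorem sum_eq_walkWeight_ofFn : ∀ {m : ℕ} (c : Fin (m + 1) → V),
    ∑ i : Fin m, w (c i.castSucc) (c i.succ) = walkWeight w (List.ofFn c)
  | 0, _ => by simp [walkWeight]
  | m + 1, c => by
    have ih := sum_eq_walkWeight_ofFn (fun i => c i.succ)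
    simp only [Fin.succ_castSucc] at ih
    rw [List.ofFn_succ] at ih
    rw [Fin.sum_univ_succ, ih, List.ofFn_succ (f := c), List.ofFn_succ (f := fun i => c i.succ)]
    simp only [Fin.castSucc_zero, walkWeight]

theorem sum_cyclic_eq_walkWeight {n : ℕ} (f : Fin (n + 1) → V) :
    ∑ j, w (f j) (f (j + 1)) = walkWeight w (List.ofFn f ++ [f 0]) := by
  simp only [Fin.sum_univ_castSucc, Fin.coeSucc_eq_succ, Fin.last_add_one, sum_eq_walkWeight_ofFn]
  rw [List.ofFn_succ', List.concat_eq_append, List.append_assoc, List.singleton_append,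
    walkWeight_append_cons _ _ _ [f 0]]
  simp [walkWeight]

theorem walkWeight_rotate (a b : V) (l : List V) :
    walkWeight w (a :: b :: l ++ [a]) = walkWeight w (b :: l ++ [a, b]) := by
  rw [walkWeight_append_cons w (b :: l) a [b]]
  simp only [List.cons_append, walkWeight]
  ring

theorem walkWeight_append_le_append_cons {v : V} (htri : ∀ x y, w x y ≤ w x v + w v y)
    {p q : List V} (hp : p ≠ []) (hq : q ≠ []) :
    walkWeight w (p ++ q) ≤ walkWeight w (p ++ v :: q) := by
  obtain ⟨p, x, rfl⟩ := (List.eq_nil_or_concat p).resolve_left hp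
  obtain ⟨y, q, rfl⟩ := List.exists_cons_of_ne_nil hq
  simp only [List.concat_eq_append, List.append_assoc, List.cons_append, List.nil_append]
  rw [walkWeight_append_cons w p x (y :: q), walkWeight_append_cons w p x (v :: y :: q)]
  simp only [walkWeight]
  linarith [htri x y]

theorem walkWeight_closed_nonneg_of_simple
    (hsimple : ∀ a l, (a :: l).Nodup → 0 ≤ walkWeight w (a :: l ++ [a]))
    (a : V) (l : List V) : 0 ≤ walkWeight w (a :: l ++ [a]) := by
  by_cases hnd : (a :: l).Nodup
  · exact hsimple a l hnd
  by_cases ha : a ∈ l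
  · obtain ⟨p, q, rfl⟩ := List.append_of_mem ha
    have hsplit : walkWeight w (a :: (p ++ a :: q) ++ [a])
        = walkWeight w (a :: p ++ [a]) + walkWeight w (a :: q ++ [a]) := by
      simpa using walkWeight_append_cons w (a :: p) a (q ++ [a])
    rw [hsplit]
    exact add_nonneg (walkWeight_closed_nonneg_of_simple hsimple a p)
      (walkWeight_closed_nonneg_of_simple hsimple a q)
  · obtain ⟨b, p, q, r, rfl⟩ :=
      List.exists_eq_append_cons_append_cons_of_not_nodup fun h =>
        hnd (List.nodup_cons.mpr ⟨ha, h⟩)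
    have hsplit : walkWeight w (a :: (p ++ b :: q ++ b :: r) ++ [a])
        = walkWeight w (a :: (p ++ b :: r) ++ [a]) + walkWeight w (b :: q ++ [b]) := by
      have h₁ := walkWeight_append_cons w (a :: p) b (q ++ b :: r ++ [a])
      have h₂ := walkWeight_append_cons w (b :: q) b (r ++ [a])
      have h₃ := walkWeight_append_cons w (a :: p) b (r ++ [a])
      simp only [List.cons_append, List.append_assoc] at h₁ h₂ h₃ ⊢
      rw [h₁, h₂, h₃]
      ring
    rw [hsplit]
    exact add_nonneg (walkWeight_closed_nonneg_of_simple hsimple a _)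
      (walkWeight_closed_nonneg_of_simple hsimple b q)
termination_by l.length
decreasing_by all_goals subst_vars; simp only [List.length_append, List.length_cons]; omega

theorem sum_closedWalk_nonneg
    (hsimple : ∀ a l, (a :: l).Nodup → 0 ≤ walkWeight w (a :: l ++ [a]))
    {m : ℕ} (c : Fin (m + 1) → V) (hc : c 0 = c (Fin.last m)) :
    0 ≤ ∑ i : Fin m, w (c i.castSucc) (c i.succ) := by
  cases m with
  | zero => simp
  | succ n =>
    rw [sum_eq_walkWeight_ofFn, List.ofFn_succ', List.ofFn_succ, ← hc]
    simpa using walkWeight_closed_nonneg_of_simple w hsimple (c 0) _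

end WalkWeight

section PotentialGraph

variable {K : ℕ} {S : Fin K → Type} [∀ k, Fintype (S k)] [∀ k, Nonempty (S k)]
  (α : (k : Fin K) → S k → Fin K → ℝ) (d : Fin K → ℝ)

noncomputable def userLen (k j : Fin K) : ℝ :=
  if k = j then 0
  else Finset.univ.inf' Finset.univ_nonempty fun l : S k => α k l k - α k l j - d k

noncomputable def exitLen (k : Fin K) : ℝ :=
  Finset.univ.inf' Finset.univ_nonempty fun l : S k => α k l k - d k

noncomputable def reducedLen : Option (Fin K) → Option (Fin K) → ℝ
  | some k, some j => userLen α d k j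
  | some k, none => exitLen α d k
  | none, _ => 0

def vertexUser : (Σ k : Fin K, S k) ⊕ Unit → Option (Fin K)
  | .inl ⟨k, _⟩ => some k
  | .inr _ => none

theorem exists_userLen_eq {k j : Fin K} (hkj : k ≠ j) :
    ∃ l : S k, userLen α d k j = α k l k - α k l j - d k := by
  obtain ⟨l, -, hl⟩ := Finset.exists_mem_eq_inf' Finset.univ_nonempty
    fun l : S k => α k l k - α k l j - d k
  exact ⟨l, by rw [userLen, if_neg hkj, hl]⟩

theorem reducedLen_vertexUser_le
    (len : ((Σ k : Fin K, S k) ⊕ Unit) → ((Σ k : Fin K, S k) ⊕ Unit) → ℝ)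
    (h1a : ∀ (k : Fin K) (lk lk' : S k), len (.inl ⟨k, lk⟩) (.inl ⟨k, lk'⟩) = 0)
    (h1b : ∀ (k j : Fin K) (lk : S k) (lj : S j), k ≠ j →
      len (.inl ⟨k, lk⟩) (.inl ⟨j, lj⟩) = (α k lk k - α k lk j) - d k)
    (h1c : ∀ (k : Fin K) (lk : S k), len (.inl ⟨k, lk⟩) (.inr ()) = α k lk k - d k)
    (h1d : ∀ (k : Fin K) (lk : S k), len (.inr ()) (.inl ⟨k, lk⟩) = 0)
    (h1e : len (.inr ()) (.inr ()) = 0) :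
    ∀ a b, reducedLen α d (vertexUser a) (vertexUser b) ≤ len a b
  | .inl ⟨k, lk⟩, .inl ⟨j, lj⟩ => by
    by_cases hkj : k = j
    · subst hkj
      simp [vertexUser, reducedLen, userLen, h1a]
    · rw [h1b k j lk lj hkj, vertexUser, vertexUser, reducedLen, userLen, if_neg hkj]
      exact Finset.inf'_le (fun l : S k => α k l k - α k l j - d k) (Finset.mem_univ lk)
  | .inl ⟨k, lk⟩, .inr () => by
    rw [h1c]
    exact Finset.inf'_le (fun l : S k => α k l k - d k) (Finset.mem_univ lk)
  | .inr (), .inl ⟨j, lj⟩ => by simp [vertexUser, reducedLen, h1d]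
  | .inr (), .inr () => by simp [vertexUser, reducedLen, h1e]

theorem reducedLen_le_add_none
    (hpos : ∀ (k : Fin K) (l : S k) (j : Fin K), 0 ≤ α k l j)
    (hsingle : ∀ (k : Fin K) (lk : S k), d k ≤ α k lk k) :
    ∀ x y, reducedLen α d x y ≤ reducedLen α d x none + reducedLen α d none y
  | none, _ => by simp [reducedLen]
  | some k, none => by simp [reducedLen]
  | some k, some j => by
    simp only [reducedLen, add_zero, userLen, exitLen]
    split_ifs
    · exact Finset.le_inf' _ _ fun l _ => by linarith [hsingle k l]
    · exact Finset.le_inf' _ _ fun l _ =>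
        (Finset.inf'_le _ (Finset.mem_univ l)).trans (by linarith [hpos k l j])

theorem userLen_cycle_nonneg
    (hcyclic : ∀ (m : ℕ) (i : Fin (m + 2) → Fin K), Function.Injective i →
      ∀ ls : (j : Fin (m + 2)) → S (i j),
        ∑ j : Fin (m + 2), d (i j) ≤
          ∑ j : Fin (m + 2), (α (i j) (ls j) (i j) - α (i j) (ls j) (i (j + 1))))
    (k : Fin K) (ks : List (Fin K)) (hks : (k :: ks).Nodup) :
    0 ≤ walkWeight (userLen α d) (k :: ks ++ [k]) := by
  cases ks with
  | nil => simp [walkWeight, userLen]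
  | cons b ks =>
    set i : Fin (ks.length + 2) → Fin K := (k :: b :: ks).get
    have hi : Function.Injective i := List.nodup_iff_injective_get.mp hks
    have hsucc (j : Fin (ks.length + 2)) : j ≠ j + 1 := by simp
    choose ls hls using fun j => exists_userLen_eq α d (hi.ne (hsucc j))
    have hsum : walkWeight (userLen α d) (k :: b :: ks ++ [k])
        = ∑ j, userLen α d (i j) (i (j + 1)) := by
      rw [sum_cyclic_eq_walkWeight]
      exact congrArg (fun l => walkWeight (userLen α d) (l ++ [k])) (List.ofFn_get _).symm
    rw [hsum, Finset.sum_congr rfl fun j _ => hls j, Finset.sum_sub_distrib, sub_nonneg]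
    exact hcyclic ks.length i hi ls

theorem reducedLen_cycle_nonneg_of_none_not_mem
    (huser : ∀ k ks, (k :: ks).Nodup → 0 ≤ walkWeight (userLen α d) (k :: ks ++ [k]))
    (a : Option (Fin K)) (l : List (Option (Fin K))) (hnd : (a :: l).Nodup)
    (hnone : none ∉ a :: l) :
    0 ≤ walkWeight (reducedLen α d) (a :: l ++ [a]) := by
  obtain ⟨_ | ⟨k, ks⟩, hks⟩ := List.exists_eq_map_some hnone
  · exact absurd hks (List.cons_ne_nil _ _)
  obtain ⟨rfl, rfl⟩ := List.cons_eq_cons.mp hks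
  have h := huser k ks ((List.nodup_map_iff (Option.some_injective _)).mp hnd)
  rwa [show some k :: ks.map some ++ [some k] = (k :: ks ++ [k]).map some by simp, walkWeight_map]

theorem reducedLen_cycle_nonneg
    (hpos : ∀ (k : Fin K) (l : S k) (j : Fin K), 0 ≤ α k l j)
    (hsingle : ∀ (k : Fin K) (lk : S k), d k ≤ α k lk k)
    (huser : ∀ k ks, (k :: ks).Nodup → 0 ≤ walkWeight (userLen α d) (k :: ks ++ [k]))
    (a : Option (Fin K)) (l : List (Option (Fin K))) (hnd : (a :: l).Nodup) :
    0 ≤ walkWeight (reducedLen α d) (a :: l ++ [a]) := by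
  have hshort := reducedLen_cycle_nonneg_of_none_not_mem α d huser
  have htri := reducedLen_le_add_none α d hpos hsingle
  by_cases hnone : none ∈ a :: l
  swap
  · exact hshort a l hnd hnone
  rcases a with _ | k
  · cases l with
    | nil => simp [walkWeight, reducedLen]
    | cons b l =>
      obtain ⟨hnone', hnd'⟩ := List.nodup_cons.mp hnd
      rw [walkWeight_rotate]
      exact (hshort b l hnd' hnone').trans
        (walkWeight_append_le_append_cons _ htri (List.cons_ne_nil _ _) (List.cons_ne_nil _ _))
  · obtain ⟨p, r, rfl⟩ := List.append_of_mem ((List.mem_cons.mp hnone).resolve_left nofun)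
    obtain ⟨hnone', hnd'⟩ :=
      List.nodup_cons.mp ((List.nodup_middle (l₁ := some k :: p)).mp hnd)
    have hskip := walkWeight_append_le_append_cons _ htri (p := some k :: p)
      (q := r ++ [some k]) (List.cons_ne_nil _ _) (by simp)
    have hcycle := hshort (some k) (p ++ r) hnd' hnone'
    simp only [List.cons_append, List.append_assoc] at hcycle hskip ⊢
    exact hcycle.trans hskip

end PotentialGraph

theorem mixed_cycles_redundant
    (K : ℕ) (S : Fin K → Type) [∀ k, Fintype (S k)] [∀ k, Nonempty (S k)]
    (α : (k : Fin K) → S k → Fin K → ℝ)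
    (hpos : ∀ (k : Fin K) (l : S k) (j : Fin K), 0 ≤ α k l j)
    (d : Fin K → ℝ)
    (len : ((Σ k : Fin K, S k) ⊕ Unit) → ((Σ k : Fin K, S k) ⊕ Unit) → ℝ)
    (h1a : ∀ (k : Fin K) (lk lk' : S k), len (.inl ⟨k, lk⟩) (.inl ⟨k, lk'⟩) = 0)
    (h1b : ∀ (k j : Fin K) (lk : S k) (lj : S j), k ≠ j →
      len (.inl ⟨k, lk⟩) (.inl ⟨j, lj⟩) = (α k lk k - α k lk j) - d k)
    (h1c : ∀ (k : Fin K) (lk : S k), len (.inl ⟨k, lk⟩) (.inr ()) = α k lk k - d k)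
    (h1d : ∀ (k : Fin K) (lk : S k), len (.inr ()) (.inl ⟨k, lk⟩) = 0)
    (h1e : len (.inr ()) (.inr ()) = 0)
    (hsingle : ∀ (k : Fin K) (lk : S k), d k ≤ α k lk k)
    (hcyclic : ∀ (m : ℕ) (i : Fin (m + 2) → Fin K), Function.Injective i →
      ∀ ls : (j : Fin (m + 2)) → S (i j),
        ∑ j : Fin (m + 2), d (i j) ≤
          ∑ j : Fin (m + 2), (α (i j) (ls j) (i j) - α (i j) (ls j) (i (j + 1)))) :
    ∀ (m : ℕ) (c : Fin (m + 1) → ((Σ k : Fin K, S k) ⊕ Unit)), c 0 = c (Fin.last m) →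
      0 ≤ ∑ i : Fin m, len (c i.castSucc) (c i.succ) := by
  intro m c hc
  calc (0 : ℝ)
      ≤ ∑ i : Fin m, reducedLen α d (vertexUser (c i.castSucc)) (vertexUser (c i.succ)) :=
        sum_closedWalk_nonneg _
          (reducedLen_cycle_nonneg α d hpos hsingle (userLen_cycle_nonneg α d hcyclic))
          (fun i => vertexUser (c i)) (by rw [hc])
    _ ≤ ∑ i : Fin m, len (c i.castSucc) (c i.succ) :=
        Finset.sum_le_sum fun i _ => reducedLen_vertexUser_le α d len h1a h1b h1c h1d h1e _ _
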